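/- arXiv:2103.09088 — 3 statements merged into one kernel-verified Lean document; each statement's English description precedes it below -/
import Mathlib

section
/- For n×n real symmetric matrices A and B with s(A+B) = s(A) + s(B), every unit eigenvector u of A+B corresponding to λ_max(A+B) satisfies Au = λ_max(A)·u and Bu = λ_max(B)·u (i.e., u is a common eigenvector of A and B for their maximal eigenvalues). -/
open Matrix

/-- Largest eigenvalue of a real symmetric (Hermitian) matrix; junk value 0 otherwise. -/
noncomputable def maxEig {m : Type*} [Fintype m] [DecidableEq m] (A : Matrix m m ℝ) : ℝ :=
  if hA : A.IsHermitian then ⨆ i, hA.eigenvalues i else 0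

/-- Smallest eigenvalue of a real symmetric (Hermitian) matrix; junk value 0 otherwise. -/
noncomputable def minEig {m : Type*} [Fintype m] [DecidableEq m] (A : Matrix m m ℝ) : ℝ :=
  if hA : A.IsHermitian then ⨅ i, hA.eigenvalues i else 0

/-- The spread of a matrix: difference of largest and smallest eigenvalues. -/
noncomputable def spread {m : Type*} [Fintype m] [DecidableEq m] (A : Matrix m m ℝ) : ℝ :=
  maxEig A - minEig A

/-- `S_n[a,b]`: real symmetric `n×n` matrices with all entries in `[a,b]`. -/
def Snab (n : ℕ) (a b : ℝ) : Set (Matrix (Fin n) (Fin n) ℝ) :=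
  {A | A.IsHermitian ∧ ∀ i j, A i j ∈ Set.Icc a b}

/-!
In the Loewner order, `maxEig A ≤ r ↔ A ≤ r • 1` and `r ≤ minEig A ↔ r • 1 ≤ A`, so the top
eigenvalue is subadditive and the bottom one superadditive; additivity of spreads therefore forces
`maxEig (A + B) = maxEig A + maxEig B`. Then `P = maxEig A • 1 - A` and `Q = maxEig B • 1 - B` are
positive semidefinite and `(P + Q) u = 0` for every top eigenvector `u` of `A + B`. Hence
`uᵀPu + uᵀQu = 0`, both terms vanish, and a positive semidefinite matrix kills every vector on
which its quadratic form vanishes.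
-/

open scoped MatrixOrder ComplexOrder

namespace Matrix

theorem algebraMap_sub_mulVec_eq_zero_iff {m R : Type*} [Fintype m] [DecidableEq m] [CommRing R]
    {A : Matrix m m R} {r : R} {x : m → R} :
    (algebraMap R (Matrix m m R) r - A) *ᵥ x = 0 ↔ A *ᵥ x = r • x := by
  rw [sub_mulVec, Algebra.algebraMap_eq_smul_one, smul_mulVec, one_mulVec, sub_eq_zero, eq_comm]

theorem PosSemidef.mulVec_eq_zero_of_add_mulVec_eq_zero {m 𝕜 : Type*} [Fintype m] [RCLike 𝕜]
    {P Q : Matrix m m 𝕜} (hP : P.PosSemidef) (hQ : Q.PosSemidef) {x : m → 𝕜}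
    (hx : (P + Q) *ᵥ x = 0) : P *ᵥ x = 0 ∧ Q *ᵥ x = 0 := by
  have hsum : star x ⬝ᵥ P *ᵥ x + star x ⬝ᵥ Q *ᵥ x = 0 := by
    rw [← dotProduct_add, ← add_mulVec, hx, dotProduct_zero]
  obtain ⟨hPx, hQx⟩ := (add_eq_zero_iff_of_nonneg (hP.dotProduct_mulVec_nonneg x)
    (hQ.dotProduct_mulVec_nonneg x)).1 hsum
  exact ⟨(hP.dotProduct_mulVec_zero_iff x).1 hPx, (hQ.dotProduct_mulVec_zero_iff x).1 hQx⟩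

namespace IsHermitian

variable {m : Type*} [Fintype m] [DecidableEq m] [Nonempty m] {A B : Matrix m m ℝ}

theorem maxEig_le_iff (hA : A.IsHermitian) {r : ℝ} :
    maxEig A ≤ r ↔ A ≤ algebraMap ℝ (Matrix m m ℝ) r := by
  rw [le_algebraMap_iff_spectrum_le hA.isSelfAdjoint, hA.spectrum_real_eq_range_eigenvalues,
    Set.forall_mem_range, maxEig, dif_pos hA, ciSup_le_iff (Set.finite_range _).bddAbove]

theorem le_minEig_iff (hA : A.IsHermitian) {r : ℝ} :
    r ≤ minEig A ↔ algebraMap ℝ (Matrix m m ℝ) r ≤ A := by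
  rw [algebraMap_le_iff_le_spectrum hA.isSelfAdjoint, hA.spectrum_real_eq_range_eigenvalues,
    Set.forall_mem_range, minEig, dif_pos hA, le_ciInf_iff (Set.finite_range _).bddBelow]

theorem maxEig_add_le (hA : A.IsHermitian) (hB : B.IsHermitian) :
    maxEig (A + B) ≤ maxEig A + maxEig B := by
  rw [(hA.add hB).maxEig_le_iff, map_add]
  exact add_le_add (hA.maxEig_le_iff.1 le_rfl) (hB.maxEig_le_iff.1 le_rfl)

theorem le_minEig_add (hA : A.IsHermitian) (hB : B.IsHermitian) :
    minEig A + minEig B ≤ minEig (A + B) := by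
  rw [(hA.add hB).le_minEig_iff, map_add]
  exact add_le_add (hA.le_minEig_iff.1 le_rfl) (hB.le_minEig_iff.1 le_rfl)

theorem maxEig_add_of_spread_add (hA : A.IsHermitian) (hB : B.IsHermitian)
    (h : spread (A + B) = spread A + spread B) : maxEig (A + B) = maxEig A + maxEig B := by
  unfold spread at h
  linarith [hA.maxEig_add_le hB, hA.le_minEig_add hB]

theorem mulVec_eq_maxEig_smul_of_maxEig_add (hA : A.IsHermitian) (hB : B.IsHermitian)
    (hmax : maxEig (A + B) = maxEig A + maxEig B) {x : m → ℝ}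
    (hx : (A + B) *ᵥ x = maxEig (A + B) • x) :
    A *ᵥ x = maxEig A • x ∧ B *ᵥ x = maxEig B • x := by
  have hP : (algebraMap ℝ (Matrix m m ℝ) (maxEig A) - A).PosSemidef :=
    le_iff.1 (hA.maxEig_le_iff.1 le_rfl)
  have hQ : (algebraMap ℝ (Matrix m m ℝ) (maxEig B) - B).PosSemidef :=
    le_iff.1 (hB.maxEig_le_iff.1 le_rfl)
  have hsum : (algebraMap ℝ (Matrix m m ℝ) (maxEig A) - A
      + (algebraMap ℝ (Matrix m m ℝ) (maxEig B) - B)) *ᵥ x = 0 := by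
    rw [← add_sub_add_comm, ← map_add, ← hmax, algebraMap_sub_mulVec_eq_zero_iff]
    exact hx
  obtain ⟨hPx, hQx⟩ := hP.mulVec_eq_zero_of_add_mulVec_eq_zero hQ hsum
  exact ⟨algebraMap_sub_mulVec_eq_zero_iff.1 hPx, algebraMap_sub_mulVec_eq_zero_iff.1 hQx⟩

end IsHermitian

end Matrix

/-- if spreads add, every top unit eigenvector of A+B is a common
top eigenvector of A and B. -/
theorem common_eigenvector_of_spread_add {n : ℕ} (A B : Matrix (Fin n) (Fin n) ℝ)
    (hA : A.IsHermitian) (hB : B.IsHermitian)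
    (h : spread (A + B) = spread A + spread B) :
    ∀ u : Fin n → ℝ, ∑ i, u i ^ 2 = 1 →
      (A + B).mulVec u = maxEig (A + B) • u →
      A.mulVec u = maxEig A • u ∧ B.mulVec u = maxEig B • u := by
  intro u _ hu
  cases isEmpty_or_nonempty (Fin n)
  · exact ⟨Subsingleton.elim _ _, Subsingleton.elim _ _⟩
  · exact hA.mulVec_eq_maxEig_smul_of_maxEig_add hB (hA.maxEig_add_of_spread_add hB h) hu
end

section
/- Let a < b be reals and let S_n[a,b] denote the set of n×n real symmetric matrices all of whose entries lie in [a,b]. Then for every n ≥ 1, max{s(A) : A ∈ S_n[a,b]} < max{s(A) : A ∈ S_{n+1}[a,b]}, i.e., the maximal spread strictly increases with dimension. -/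
/-!
A maximizer exists because `spread A` is the maximum of `x ⬝ᵥ A *ᵥ x - y ⬝ᵥ A *ᵥ y` over unit
vectors `x, y`, a continuous function that can be maximized jointly over the compact set
`S_n[a,b] × S × S`, where `S` is the unit sphere.

For strict growth let `A` maximize the spread on `S_n[a,b]` and suppose `λ_max(A) > 0`. Take a unit
top eigenvector `v`, a coordinate `i` with `v i ≠ 0`, and let `B ∈ S_{n+1}[a,b]` be `A` with row and
column `i` duplicated. Splitting `v i` into two halves `v i / 2` over the two copies of `i` gives a
vector `w` with `wᵀ B w = vᵀ A v = λ_max(A)` but `‖w‖² = 1 - (v i)² / 2 < 1`, so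
`λ_max(B) > λ_max(A)`; splitting `v i` as `(v i, 0)` instead shows `λ_min(B) ≤ λ_min(A)`. The case
`λ_min(A) < 0` is symmetric. If the maximal spread on `S_n[a,b]` is `0`, a matrix of
`S_{n+1}[a,b]` with diagonal entries `b` and `a` already has spread at least `b - a > 0`.
-/

open Matrix

open scoped MatrixOrder

namespace Matrix.IsHermitian

variable {m : Type*} [Fintype m] [DecidableEq m] {A : Matrix m m ℝ}

lemma eigenvalues_le_maxEig (hA : A.IsHermitian) (i : m) : hA.eigenvalues i ≤ maxEig A := by
  rw [maxEig, dif_pos hA]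
  exact le_ciSup (Set.finite_range _).bddAbove i

lemma minEig_le_eigenvalues (hA : A.IsHermitian) (i : m) : minEig A ≤ hA.eigenvalues i := by
  rw [minEig, dif_pos hA]
  exact ciInf_le (Set.finite_range _).bddBelow i

lemma dotProduct_mulVec_le_maxEig_mul (hA : A.IsHermitian) (x : m → ℝ) :
    x ⬝ᵥ A *ᵥ x ≤ maxEig A * (x ⬝ᵥ x) := by
  have hle : A ≤ algebraMap ℝ _ (maxEig A) := by
    rw [le_algebraMap_iff_spectrum_le hA.isSelfAdjoint, hA.spectrum_real_eq_range_eigenvalues]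
    rintro _ ⟨i, rfl⟩
    exact hA.eigenvalues_le_maxEig i
  simpa [sub_mulVec, Algebra.algebraMap_eq_smul_one, smul_mulVec] using
    (Matrix.le_iff.1 hle).dotProduct_mulVec_nonneg x

lemma minEig_mul_le_dotProduct_mulVec (hA : A.IsHermitian) (x : m → ℝ) :
    minEig A * (x ⬝ᵥ x) ≤ x ⬝ᵥ A *ᵥ x := by
  have hle : algebraMap ℝ _ (minEig A) ≤ A := by
    rw [algebraMap_le_iff_le_spectrum hA.isSelfAdjoint, hA.spectrum_real_eq_range_eigenvalues]
    rintro _ ⟨i, rfl⟩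
    exact hA.minEig_le_eigenvalues i
  simpa [sub_mulVec, Algebra.algebraMap_eq_smul_one, smul_mulVec] using
    (Matrix.le_iff.1 hle).dotProduct_mulVec_nonneg x

lemma eigenvectorBasis_dotProduct_self (hA : A.IsHermitian) (i : m) :
    ⇑(hA.eigenvectorBasis i) ⬝ᵥ ⇑(hA.eigenvectorBasis i) = 1 := by
  have h := real_inner_self_eq_norm_sq (hA.eigenvectorBasis i)
  rw [hA.eigenvectorBasis.orthonormal.1 i, EuclideanSpace.inner_eq_star_dotProduct] at h
  simpa using h

lemma eigenvectorBasis_dotProduct_mulVec (hA : A.IsHermitian) (i : m) :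
    ⇑(hA.eigenvectorBasis i) ⬝ᵥ A *ᵥ ⇑(hA.eigenvectorBasis i) = hA.eigenvalues i := by
  rw [hA.mulVec_eigenvectorBasis, dotProduct_smul, hA.eigenvectorBasis_dotProduct_self,
    smul_eq_mul, mul_one]

lemma exists_dotProduct_mulVec_eq_maxEig [Nonempty m] (hA : A.IsHermitian) :
    ∃ v : m → ℝ, v ⬝ᵥ v = 1 ∧ v ⬝ᵥ A *ᵥ v = maxEig A := by
  obtain ⟨i, hi⟩ := exists_eq_ciSup_of_finite (f := hA.eigenvalues)
  refine ⟨_, hA.eigenvectorBasis_dotProduct_self i, ?_⟩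
  rw [hA.eigenvectorBasis_dotProduct_mulVec, hi, maxEig, dif_pos hA]

lemma exists_dotProduct_mulVec_eq_minEig [Nonempty m] (hA : A.IsHermitian) :
    ∃ v : m → ℝ, v ⬝ᵥ v = 1 ∧ v ⬝ᵥ A *ᵥ v = minEig A := by
  obtain ⟨i, hi⟩ := exists_eq_ciInf_of_finite (f := hA.eigenvalues)
  refine ⟨_, hA.eigenvectorBasis_dotProduct_self i, ?_⟩
  rw [hA.eigenvectorBasis_dotProduct_mulVec, hi, minEig, dif_pos hA]

lemma sub_le_spread (hA : A.IsHermitian) {x y : m → ℝ} (hx : x ⬝ᵥ x = 1) (hy : y ⬝ᵥ y = 1) :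
    x ⬝ᵥ A *ᵥ x - y ⬝ᵥ A *ᵥ y ≤ spread A := by
  have hmax := hA.dotProduct_mulVec_le_maxEig_mul x
  have hmin := hA.minEig_mul_le_dotProduct_mulVec y
  rw [hx, mul_one] at hmax
  rw [hy, mul_one] at hmin
  rw [spread]
  linarith

lemma exists_sub_eq_spread [Nonempty m] (hA : A.IsHermitian) :
    ∃ x y : m → ℝ, x ⬝ᵥ x = 1 ∧ y ⬝ᵥ y = 1 ∧ x ⬝ᵥ A *ᵥ x - y ⬝ᵥ A *ᵥ y = spread A := by
  obtain ⟨x, hx, hAx⟩ := hA.exists_dotProduct_mulVec_eq_maxEig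
  obtain ⟨y, hy, hAy⟩ := hA.exists_dotProduct_mulVec_eq_minEig
  exact ⟨x, y, hx, hy, by rw [hAx, hAy, spread]⟩

lemma diag_sub_diag_le_spread (hA : A.IsHermitian) (i j : m) : A i i - A j j ≤ spread A := by
  simpa using hA.sub_le_spread (x := Pi.single i 1) (y := Pi.single j 1) (by simp) (by simp)

end Matrix.IsHermitian

section Compact

variable {m : Type*} [Fintype m]

lemma isCompact_setOf_dotProduct_self_eq_one : IsCompact {x : m → ℝ | x ⬝ᵥ x = 1} := by
  refine Metric.isCompact_of_isClosed_isBounded (isClosed_eq (by fun_prop) continuous_const)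
    ((Metric.isBounded_closedBall (x := 0) (r := 1)).subset fun x (hx : x ⬝ᵥ x = 1) => ?_)
  rw [mem_closedBall_zero_iff, pi_norm_le_iff_of_nonneg zero_le_one]
  intro i
  rw [Real.norm_eq_abs, abs_le_one_iff_mul_self_le_one, ← hx]
  exact Finset.single_le_sum (fun j _ => mul_self_nonneg (x j)) (Finset.mem_univ i)

lemma IsCompact.exists_isGreatest_spread [DecidableEq m] [Nonempty m] {K : Set (Matrix m m ℝ)}
    (hK : IsCompact K) (hne : K.Nonempty) (hherm : ∀ A ∈ K, A.IsHermitian) :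
    ∃ A ∈ K, IsGreatest (spread '' K) (spread A) := by
  set S := {x : m → ℝ | x ⬝ᵥ x = 1}
  have hS : S.Nonempty := ⟨Pi.single (Classical.arbitrary m) 1, by simp [S]⟩
  let f : Matrix m m ℝ × (m → ℝ) × (m → ℝ) → ℝ := fun p =>
    p.2.1 ⬝ᵥ p.1 *ᵥ p.2.1 - p.2.2 ⬝ᵥ p.1 *ᵥ p.2.2
  obtain ⟨⟨A, x, y⟩, ⟨hA, hx, hy⟩, hmax⟩ :=
    (hK.prod (isCompact_setOf_dotProduct_self_eq_one.prod isCompact_setOf_dotProduct_self_eq_one))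
      |>.exists_isMaxOn (hne.prod (hS.prod hS)) (by fun_prop : Continuous f).continuousOn
  refine ⟨A, hA, Set.mem_image_of_mem _ hA, ?_⟩
  rintro _ ⟨B, hB, rfl⟩
  obtain ⟨x', y', hx', hy', hB'⟩ := (hherm B hB).exists_sub_eq_spread
  calc spread B = f (B, x', y') := hB'.symm
    _ ≤ f (A, x, y) := hmax ⟨hB, hx', hy'⟩
    _ ≤ spread A := (hherm A hA).sub_le_spread hx hy

end Compact

section Duplicate

variable {R : Type*} [CommRing R] {n : ℕ}

/-- `A.submatrix (dupIndex i) (dupIndex i)` is `A` with row and column `i` copied to a new last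
row and column; `dupVec v i t` splits `v i` into `t` at `i` and `v i - t` at the new last index. -/
def dupIndex (i : Fin n) : Fin (n + 1) → Fin n :=
  Fin.snoc (α := fun _ => Fin n) id i

def dupVec (v : Fin n → R) (i : Fin n) (t : R) : Fin (n + 1) → R :=
  Fin.snoc (Function.update v i t) (v i - t)

lemma comp_dupIndex_dotProduct_dupVec (h v : Fin n → R) (i : Fin n) (t : R) :
    (h ∘ dupIndex i) ⬝ᵥ dupVec v i t = h ⬝ᵥ v := by
  simp only [dotProduct, Fin.sum_univ_castSucc, Function.comp_apply, dupIndex, dupVec,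
    Fin.snoc_castSucc, Fin.snoc_last, id]
  change h ⬝ᵥ Function.update v i t + _ = h ⬝ᵥ v
  rw [Pi.update_eq_sub_add_single]
  simp only [dotProduct_add, dotProduct_sub, dotProduct_single]
  ring

lemma dupVec_dotProduct_dupVec (v : Fin n → R) (i : Fin n) (t : R) :
    dupVec v i t ⬝ᵥ dupVec v i t = v ⬝ᵥ v - v i ^ 2 + t ^ 2 + (v i - t) ^ 2 := by
  simp only [dotProduct, Fin.sum_univ_castSucc, dupVec, Fin.snoc_castSucc, Fin.snoc_last]
  change Function.update v i t ⬝ᵥ Function.update v i t + _ = v ⬝ᵥ v - _ + _ + _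
  rw [Pi.update_eq_sub_add_single]
  simp only [add_dotProduct, sub_dotProduct, dotProduct_add, dotProduct_sub, single_dotProduct,
    dotProduct_single, Pi.add_apply, Pi.sub_apply, Pi.single_eq_same]
  ring

lemma dupVec_self_dotProduct_self (v : Fin n → R) (i : Fin n) :
    dupVec v i (v i) ⬝ᵥ dupVec v i (v i) = v ⬝ᵥ v := by
  rw [dupVec_dotProduct_dupVec]
  ring

lemma submatrix_dupIndex_mulVec_dupVec (A : Matrix (Fin n) (Fin n) R) (v : Fin n → R)
    (i : Fin n) (t : R) :
    A.submatrix (dupIndex i) (dupIndex i) *ᵥ dupVec v i t = (A *ᵥ v) ∘ dupIndex i := by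
  ext p
  exact comp_dupIndex_dotProduct_dupVec (A (dupIndex i p)) v i t

lemma dupVec_dotProduct_submatrix_mulVec (A : Matrix (Fin n) (Fin n) R) (v : Fin n → R)
    (i : Fin n) (t : R) :
    dupVec v i t ⬝ᵥ A.submatrix (dupIndex i) (dupIndex i) *ᵥ dupVec v i t = v ⬝ᵥ A *ᵥ v := by
  rw [submatrix_dupIndex_mulVec_dupVec, dotProduct_comm, comp_dupIndex_dotProduct_dupVec,
    dotProduct_comm]

end Duplicate

lemma exists_dupVec_dotProduct_self_lt_one {K : Type*} [Field K] [LinearOrder K]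
    [IsStrictOrderedRing K] {n : ℕ} {v : Fin n → K} (hv : v ⬝ᵥ v = 1) :
    ∃ i, dupVec v i (v i / 2) ⬝ᵥ dupVec v i (v i / 2) < 1 := by
  obtain ⟨i, hi⟩ : ∃ i, v i ≠ 0 := by
    by_contra! h
    simp [show v = 0 from funext h] at hv
  refine ⟨i, ?_⟩
  rw [dupVec_dotProduct_dupVec, hv]
  nlinarith [sq_pos_of_ne_zero hi]

namespace Matrix.IsHermitian

variable {n : ℕ} {A : Matrix (Fin n) (Fin n) ℝ}

lemma maxEig_le_maxEig_submatrix_dupIndex (hA : A.IsHermitian) (i : Fin n) :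
    maxEig A ≤ maxEig (A.submatrix (dupIndex i) (dupIndex i)) := by
  have : Nonempty (Fin n) := ⟨i⟩
  obtain ⟨v, hv, hAv⟩ := hA.exists_dotProduct_mulVec_eq_maxEig
  have h := (hA.submatrix (dupIndex i)).dotProduct_mulVec_le_maxEig_mul (dupVec v i (v i))
  rwa [dupVec_dotProduct_submatrix_mulVec, dupVec_self_dotProduct_self, hv, hAv, mul_one] at h

lemma minEig_submatrix_dupIndex_le_minEig (hA : A.IsHermitian) (i : Fin n) :
    minEig (A.submatrix (dupIndex i) (dupIndex i)) ≤ minEig A := by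
  have : Nonempty (Fin n) := ⟨i⟩
  obtain ⟨v, hv, hAv⟩ := hA.exists_dotProduct_mulVec_eq_minEig
  have h := (hA.submatrix (dupIndex i)).minEig_mul_le_dotProduct_mulVec (dupVec v i (v i))
  rwa [dupVec_dotProduct_submatrix_mulVec, dupVec_self_dotProduct_self, hv, hAv, mul_one] at h

lemma exists_maxEig_lt_maxEig_submatrix_dupIndex [Nonempty (Fin n)] (hA : A.IsHermitian)
    (hpos : 0 < maxEig A) : ∃ i, maxEig A < maxEig (A.submatrix (dupIndex i) (dupIndex i)) := by
  obtain ⟨v, hv, hAv⟩ := hA.exists_dotProduct_mulVec_eq_maxEig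
  obtain ⟨i, hi⟩ := exists_dupVec_dotProduct_self_lt_one hv
  have h := (hA.submatrix (dupIndex i)).dotProduct_mulVec_le_maxEig_mul (dupVec v i (v i / 2))
  rw [dupVec_dotProduct_submatrix_mulVec, hAv] at h
  have hw : 0 ≤ dupVec v i (v i / 2) ⬝ᵥ dupVec v i (v i / 2) := by
    simpa using dotProduct_self_star_nonneg (dupVec v i (v i / 2))
  exact ⟨i, by nlinarith⟩

lemma exists_minEig_submatrix_dupIndex_lt_minEig [Nonempty (Fin n)] (hA : A.IsHermitian)
    (hneg : minEig A < 0) : ∃ i, minEig (A.submatrix (dupIndex i) (dupIndex i)) < minEig A := by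
  obtain ⟨v, hv, hAv⟩ := hA.exists_dotProduct_mulVec_eq_minEig
  obtain ⟨i, hi⟩ := exists_dupVec_dotProduct_self_lt_one hv
  have h := (hA.submatrix (dupIndex i)).minEig_mul_le_dotProduct_mulVec (dupVec v i (v i / 2))
  rw [dupVec_dotProduct_submatrix_mulVec, hAv] at h
  have hw : 0 ≤ dupVec v i (v i / 2) ⬝ᵥ dupVec v i (v i / 2) := by
    simpa using dotProduct_self_star_nonneg (dupVec v i (v i / 2))
  exact ⟨i, by nlinarith⟩

lemma exists_spread_lt_spread_submatrix_dupIndex [Nonempty (Fin n)] (hA : A.IsHermitian)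
    (hpos : 0 < spread A) : ∃ i, spread A < spread (A.submatrix (dupIndex i) (dupIndex i)) := by
  rw [spread] at hpos
  rcases lt_or_ge 0 (maxEig A) with hmax | hmax
  · obtain ⟨i, hi⟩ := hA.exists_maxEig_lt_maxEig_submatrix_dupIndex hmax
    have := hA.minEig_submatrix_dupIndex_le_minEig i
    exact ⟨i, by rw [spread, spread]; linarith⟩
  · obtain ⟨i, hi⟩ := hA.exists_minEig_submatrix_dupIndex_lt_minEig (by linarith)
    have := hA.maxEig_le_maxEig_submatrix_dupIndex i
    exact ⟨i, by rw [spread, spread]; linarith⟩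

end Matrix.IsHermitian

section Snab

variable {a b : ℝ}

lemma isCompact_Snab (n : ℕ) : IsCompact (Snab n a b) := by
  have hherm : IsClosed {A : Matrix (Fin n) (Fin n) ℝ | A.IsHermitian} :=
    isClosed_eq continuous_id.matrix_conjTranspose continuous_id
  have hbox : IsCompact {A : Matrix (Fin n) (Fin n) ℝ | ∀ i j, A i j ∈ Set.Icc a b} := by
    have := isCompact_univ_pi fun _ : Fin n =>
      isCompact_univ_pi fun _ : Fin n => isCompact_Icc (a := a) (b := b)
    simp only [Set.pi, Set.mem_univ, forall_const] at this
    exact this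
  exact hbox.inter_left hherm

lemma nonempty_Snab (n : ℕ) (hab : a ≤ b) : (Snab n a b).Nonempty :=
  ⟨of fun _ _ => a, IsHermitian.ext fun _ _ => rfl, fun _ _ => ⟨le_rfl, hab⟩⟩

lemma submatrix_mem_Snab {n k : ℕ} {A : Matrix (Fin n) (Fin n) ℝ} (hA : A ∈ Snab n a b)
    (f : Fin k → Fin n) : A.submatrix f f ∈ Snab k a b :=
  ⟨hA.1.submatrix f, fun _ _ => hA.2 _ _⟩

lemma exists_mem_Snab_sub_le_spread {n : ℕ} (hab : a ≤ b) {i j : Fin n} (hij : i ≠ j) :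
    ∃ C ∈ Snab n a b, b - a ≤ spread C := by
  let C : Matrix (Fin n) (Fin n) ℝ := of fun p q => if p = i ∧ q = i then b else a
  have hC : C ∈ Snab n a b := by
    refine ⟨IsHermitian.ext fun p q => by simp [C, and_comm], fun p q => ?_⟩
    simp only [C, of_apply]
    split_ifs <;> exact ⟨by linarith, by linarith⟩
  refine ⟨C, hC, ?_⟩
  simpa [C, hij.symm] using hC.1.diag_sub_diag_le_spread i j

end Snab

/-- the maximal spread on S_n[a,b] strictly increases with n. -/
theorem max_spread_strict_mono {a b : ℝ} (hab : a < b) (n : ℕ) (hn : 1 ≤ n) :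
    ∃ M M' : ℝ, IsGreatest (spread '' Snab n a b) M ∧
      IsGreatest (spread '' Snab (n + 1) a b) M' ∧ M < M' := by
  have : Nonempty (Fin n) := ⟨⟨0, hn⟩⟩
  obtain ⟨A, hA, hM⟩ := (isCompact_Snab n).exists_isGreatest_spread
    (nonempty_Snab n hab.le) fun _ h => h.1
  obtain ⟨B, -, hM'⟩ := (isCompact_Snab (n + 1)).exists_isGreatest_spread
    (nonempty_Snab (n + 1) hab.le) fun _ h => h.1
  refine ⟨_, _, hM, hM', ?_⟩
  rcases lt_or_ge 0 (spread A) with hpos | hnonpos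
  · obtain ⟨i, hi⟩ := hA.1.exists_spread_lt_spread_submatrix_dupIndex hpos
    exact hi.trans_le (hM'.2 ⟨_, submatrix_mem_Snab hA _, rfl⟩)
  · obtain ⟨C, hC, hbaC⟩ :=
      exists_mem_Snab_sub_le_spread hab.le (Fin.castSucc_lt_last (⟨0, hn⟩ : Fin n)).ne
    linarith [hM'.2 ⟨C, hC, rfl⟩]
end

section
/- For every n×n real symmetric matrix A, the spread satisfies Mirsky's bound: s(A) ≤ sqrt(2‖A‖_F² − tr(A)²/n), where ‖A‖_F is the Frobenius norm. -/
open Matrix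

/-! Diagonalizing `A` turns its trace and the sum of its squared entries into the sum and the sum
of squares of its eigenvalues `λᵢ`. For the extreme eigenvalues and any `c`,
`(λmax - λmin)² ≤ 2 ((λmax - c)² + (λmin - c)²) ≤ 2 ∑ (λᵢ - c)²`, and taking `c` the mean of the
`λᵢ` gives `s(A)² ≤ 2 ‖A‖_F² - 2 tr(A)² / n`. -/

namespace Matrix.IsHermitian
variable {𝕜 n : Type*} [RCLike 𝕜] [Fintype n] [DecidableEq n] {A : Matrix n n 𝕜}

theorem trace_mul_self_eq_sum_eigenvalues_sq (hA : A.IsHermitian) :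
    (A * A).trace = ∑ i, (hA.eigenvalues i : 𝕜) ^ 2 := by
  conv_lhs => rw [hA.spectral_theorem, ← map_mul, Unitary.conjStarAlgAut_apply,
    trace_mul_cycle, Unitary.coe_star_mul_self, one_mul, diagonal_mul_diagonal, trace_diagonal]
  simp [sq]

theorem sum_eigenvalues_sq_eq_sum_norm_sq (hA : A.IsHermitian) :
    ∑ i, hA.eigenvalues i ^ 2 = ∑ i, ∑ j, ‖A i j‖ ^ 2 := by
  have h : (A * Aᴴ).trace = ∑ i, ∑ j, (‖A i j‖ ^ 2 : 𝕜) := by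
    simp [trace, mul_apply, RCLike.mul_conj]
  rw [hA.eq, trace_mul_self_eq_sum_eigenvalues_sq] at h
  exact_mod_cast h

end Matrix.IsHermitian

theorem sum_sub_mean_sq_eq_sum_sq_sub {ι : Type*} [Fintype ι] (f : ι → ℝ) :
    ∑ i, (f i - (∑ j, f j) / Fintype.card ι) ^ 2 =
      ∑ i, f i ^ 2 - (∑ i, f i) ^ 2 / Fintype.card ι := by
  rcases isEmpty_or_nonempty ι with _ | _
  · simp
  have : (Fintype.card ι : ℝ) ≠ 0 := by positivity
  simp only [sub_sq, Finset.sum_add_distrib, Finset.sum_sub_distrib, ← Finset.sum_mul,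
    ← Finset.mul_sum, Finset.sum_const, Finset.card_univ, nsmul_eq_mul]
  field_simp
  ring

theorem sq_sub_le_two_mul_sum_sq_sub {ι : Type*} [Fintype ι] (f : ι → ℝ) (c : ℝ) (p q : ι) :
    (f p - f q) ^ 2 ≤ 2 * ∑ i, (f i - c) ^ 2 := by
  classical
  rcases eq_or_ne p q with rfl | hpq
  · rw [sub_self, zero_pow two_ne_zero]; positivity
  calc (f p - f q) ^ 2 ≤ 2 * ((f p - c) ^ 2 + (f q - c) ^ 2) := by
        nlinarith [sq_nonneg (f p + f q - 2 * c)]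
    _ = 2 * ∑ i ∈ {p, q}, (f i - c) ^ 2 := by rw [Finset.sum_pair hpq]
    _ ≤ 2 * ∑ i, (f i - c) ^ 2 := by gcongr; exact Finset.subset_univ _

section Spread
variable {m : Type*} [Fintype m] [DecidableEq m] {A : Matrix m m ℝ}

theorem spread_eq_iSup_sub_iInf (hA : A.IsHermitian) :
    spread A = (⨆ i, hA.eigenvalues i) - ⨅ i, hA.eigenvalues i := by
  rw [spread, maxEig, minEig, dif_pos hA, dif_pos hA]

theorem spread_sq_le_two_mul_sum_sq_sub (hA : A.IsHermitian) (c : ℝ) :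
    spread A ^ 2 ≤ 2 * ∑ i, (hA.eigenvalues i - c) ^ 2 := by
  rw [spread_eq_iSup_sub_iInf hA]
  rcases isEmpty_or_nonempty m with _ | _
  · simp
  obtain ⟨p, hp⟩ := exists_eq_ciSup_of_finite (f := hA.eigenvalues)
  obtain ⟨q, hq⟩ := exists_eq_ciInf_of_finite (f := hA.eigenvalues)
  rw [← hp, ← hq]
  exact sq_sub_le_two_mul_sum_sq_sub _ c p q

theorem spread_le_sqrt_two_mul_sum_sq_sub_two_mul_trace_sq (hA : A.IsHermitian) :
    spread A ≤ √(2 * ∑ i, ∑ j, A i j ^ 2 - 2 * A.trace ^ 2 / Fintype.card m) := by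
  have htrace : A.trace = ∑ i, hA.eigenvalues i := by simpa using hA.trace_eq_sum_eigenvalues
  have hfrob : ∑ i, ∑ j, A i j ^ 2 = ∑ i, hA.eigenvalues i ^ 2 := by
    simpa using hA.sum_eigenvalues_sq_eq_sum_norm_sq.symm
  apply Real.le_sqrt_of_sq_le
  calc spread A ^ 2
      ≤ 2 * ∑ i, (hA.eigenvalues i - (∑ j, hA.eigenvalues j) / Fintype.card m) ^ 2 :=
        spread_sq_le_two_mul_sum_sq_sub hA _
    _ = 2 * ∑ i, ∑ j, A i j ^ 2 - 2 * A.trace ^ 2 / Fintype.card m := by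
        rw [sum_sub_mean_sq_eq_sum_sq_sub, htrace, hfrob]; ring

end Spread

/-- Mirsky's bound: s(A) ≤ sqrt(2‖A‖_F² − tr(A)²/n). -/
theorem spread_le_mirsky {n : ℕ} (A : Matrix (Fin n) (Fin n) ℝ) (hA : A.IsHermitian) :
    spread A ≤ Real.sqrt (2 * ∑ i, ∑ j, (A i j) ^ 2 - (A.trace) ^ 2 / n) := by
  refine (spread_le_sqrt_two_mul_sum_sq_sub_two_mul_trace_sq hA).trans (Real.sqrt_le_sqrt ?_)
  have : 0 ≤ A.trace ^ 2 / n := by positivity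
  rw [Fintype.card_fin, mul_div_assoc]
  linarith
end
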